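/- Let T be a symbol/check tree in which every leaf symbol node has initial erasure probability ε⁰ < 1, and every symbol node whose initial erasure probability equals 1 has at least one check-node child. Then every symbol node of T and every check node of T has erasure probability strictly less than 1; in particular the erasure probability of the root of T is strictly less than 1. -/

import Mathlib

/-- A symbol/check tree node: a symbol node carries an initial erasure
probability `eps0` and a (possibly empty) list of check-node children;
a check node carries a list of symbol-node children. -/
inductive SCTree : Type where
  | sym (eps0 : ℝ) (children : List SCTree) : SCTree
  | chk (children : List SCTree) : SCTree

mutual
/-- Erasure probability of a node: `ε_v = ε⁰_v * ∏_c ε_c` for a symbol node,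
`ε_c = 1 - ∏_w (1 - ε_w)` for a check node. -/
def SCTree.eps : SCTree → ℝ
  | .sym e cs => e * SCTree.prodEps cs
  | .chk ss => 1 - SCTree.prodOneSubEps ss

/-- `∏_c ε_c` over a list of nodes. -/
def SCTree.prodEps : List SCTree → ℝ
  | [] => 1
  | t :: ts => t.eps * SCTree.prodEps ts

/-- `∏_w (1 - ε_w)` over a list of nodes. -/
def SCTree.prodOneSubEps : List SCTree → ℝ
  | [] => 1
  | t :: ts => (1 - t.eps) * SCTree.prodOneSubEps ts
end

mutual
/-- Well-formed symbol-rooted symbol/check tree: the root is a symbol node,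
its initial erasure probability lies in `[0,1]`, and all children are
well-formed check-rooted trees. -/
inductive SCTree.WFSym : SCTree → Prop where
  | mk (e : ℝ) (cs : List SCTree) : 0 ≤ e → e ≤ 1 →
      (∀ c ∈ cs, SCTree.WFChk c) → SCTree.WFSym (.sym e cs)

/-- Well-formed check-rooted symbol/check tree: the root is a check node with
a nonempty list of well-formed symbol-rooted children. -/
inductive SCTree.WFChk : SCTree → Prop where
  | mk (ss : List SCTree) : ss ≠ [] →
      (∀ s ∈ ss, SCTree.WFSym s) → SCTree.WFChk (.chk ss)
end

/-- `SCTree.Subtree u t` : `u` is a node (subtree) of `t`. -/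
inductive SCTree.Subtree : SCTree → SCTree → Prop where
  | refl (t : SCTree) : SCTree.Subtree t t
  | sym_child {u c : SCTree} (e : ℝ) (cs : List SCTree) :
      c ∈ cs → SCTree.Subtree u c → SCTree.Subtree u (.sym e cs)
  | chk_child {u s : SCTree} (ss : List SCTree) :
      s ∈ ss → SCTree.Subtree u s → SCTree.Subtree u (.chk ss)

/-!
Bottom-up, every node's erasure probability lies in `[0, 1)`. A leaf symbol's value is its
`ε⁰ < 1`; any other symbol node multiplies `ε⁰ ≤ 1` by a nonempty product of factors in
`[0, 1)`; a check node's value is `1` minus a product of factors in `(0, 1]`, which is positive.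
-/

open Set

namespace List
variable {ι R : Type*} [CommSemiring R] [PartialOrder R] [IsOrderedRing R]

lemma prod_map_le_one {l : List ι} {f : ι → R} (hf : ∀ i ∈ l, f i ∈ Set.Icc 0 1) :
    (l.map f).prod ≤ 1 := by
  simpa using
    prod_map_le_prod_map₀ f (fun _ => 1) (fun i hi => (hf i hi).1) fun i hi => (hf i hi).2

lemma prod_map_lt_one {l : List ι} {f : ι → R} (hl : l ≠ [])
    (hf : ∀ i ∈ l, f i ∈ Set.Ico 0 1) : (l.map f).prod < 1 := by
  obtain ⟨i, l, rfl⟩ := exists_cons_of_ne_nil hl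
  have hprod : (l.map f).prod ≤ 1 :=
    prod_map_le_one fun j hj => Set.Ico_subset_Icc_self (hf j (mem_cons_of_mem i hj))
  rw [map_cons, prod_cons]
  exact (mul_le_of_le_one_right (hf i mem_cons_self).1 hprod).trans_lt (hf i mem_cons_self).2

end List

namespace SCTree

lemma prodEps_eq_prod_map (ts : List SCTree) : prodEps ts = (ts.map eps).prod := by
  induction ts with
  | nil => rfl
  | cons t ts ih => simp [prodEps, ih]

lemma prodOneSubEps_eq_prod_map (ts : List SCTree) :
    prodOneSubEps ts = (ts.map fun t => 1 - t.eps).prod := by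
  induction ts with
  | nil => rfl
  | cons t ts ih => simp [prodOneSubEps, ih]

theorem Subtree.trans {a b c : SCTree} (hab : Subtree a b) (hbc : Subtree b c) : Subtree a c := by
  induction hbc with
  | refl => exact hab
  | sym_child e cs hm _ ih => exact .sym_child e cs hm ih
  | chk_child ss hm _ ih => exact .chk_child ss hm ih

def LeafEpsLtOne (t : SCTree) : Prop := ∀ e : ℝ, Subtree (.sym e []) t → e < 1

lemma LeafEpsLtOne.of_subtree {u t : SCTree} (ht : t.LeafEpsLtOne) (hu : Subtree u t) :
    u.LeafEpsLtOne := fun e he => ht e (he.trans hu)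

mutual
theorem WFSym.eps_mem_Ico {t : SCTree} (h : WFSym t) (hl : t.LeafEpsLtOne) : t.eps ∈ Ico 0 1 :=
  match t, h with
  | .sym e cs, .mk _ _ he0 he1 hcs => by
    have hc : ∀ c ∈ cs, c.eps ∈ Ico 0 1 := fun c hc =>
      (hcs c hc).eps_mem_Ico (hl.of_subtree (.sym_child e cs hc (.refl c)))
    have hp0 : 0 ≤ prodEps cs := by
      rw [prodEps_eq_prod_map]
      exact List.prod_nonneg (by simpa using fun c hc' => (hc c hc').1)
    refine ⟨mul_nonneg he0 hp0, ?_⟩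
    rcases eq_or_ne cs [] with rfl | hne
    · simpa [eps, prodEps] using hl e (.refl _)
    · have hp1 : prodEps cs < 1 := by
        rw [prodEps_eq_prod_map]
        exact List.prod_map_lt_one hne hc
      exact (mul_le_of_le_one_left hp0 he1).trans_lt hp1
theorem WFChk.eps_mem_Ico {t : SCTree} (h : WFChk t) (hl : t.LeafEpsLtOne) : t.eps ∈ Ico 0 1 :=
  match t, h with
  | .chk ss, .mk _ _ hss => by
    have hs : ∀ s ∈ ss, 1 - s.eps ∈ Ioc 0 1 := fun s hs => by
      obtain ⟨h0, h1⟩ := (hss s hs).eps_mem_Ico (hl.of_subtree (.chk_child ss hs (.refl s)))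
      constructor <;> linarith
    have hp0 : 0 < prodOneSubEps ss := by
      rw [prodOneSubEps_eq_prod_map]
      exact List.prod_pos (by simpa using fun s hs' => (hs s hs').1)
    have hp1 : prodOneSubEps ss ≤ 1 := by
      rw [prodOneSubEps_eq_prod_map]
      exact List.prod_map_le_one fun s hs' => Ioc_subset_Icc_self (hs s hs')
    simp only [eps, mem_Ico]
    constructor <;> linarith
end

theorem Subtree.wfSym_or_wfChk {u t : SCTree} (h : Subtree u t) (ht : WFSym t ∨ WFChk t) :
    WFSym u ∨ WFChk u := by
  induction h with
  | refl => exact ht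
  | sym_child e cs hc _ ih =>
    rcases ht with ⟨_, _, _, _, hcs⟩ | h
    · exact ih (.inr (hcs _ hc))
    · cases h
  | chk_child ss hs _ ih =>
    rcases ht with h | ⟨_, _, hss⟩
    · cases h
    · exact ih (.inl (hss _ hs))

theorem eps_mem_Ico {t : SCTree} (ht : WFSym t ∨ WFChk t) (hl : t.LeafEpsLtOne) :
    t.eps ∈ Ico 0 1 :=
  ht.elim (·.eps_mem_Ico hl) (·.eps_mem_Ico hl)

end SCTree

/-- **Every node of the tree has erasure probability `< 1`.**
Let `T` be a (well-formed) symbol/check tree in which every leaf symbol node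
has initial erasure probability `ε⁰ < 1`, and every symbol node whose initial
erasure probability equals `1` has at least one check-node child.  Then every
symbol node and every check node of `T` has erasure probability strictly less
than `1`; in particular the erasure probability of the root of `T` is strictly
less than `1`. -/
theorem eps_lt_one_of_leaves_lt_one (T : SCTree) (hWF : T.WFSym)
    (hleaf : ∀ e : ℝ, SCTree.Subtree (.sym e []) T → e < 1)
    (hpunct : ∀ (e : ℝ) (cs : List SCTree),
      SCTree.Subtree (.sym e cs) T → e = 1 → cs ≠ []) :
    (∀ u : SCTree, SCTree.Subtree u T → u.eps < 1) ∧ T.eps < 1 := by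
  have hnodes : ∀ u, SCTree.Subtree u T → u.eps < 1 := fun u hu =>
    (SCTree.eps_mem_Ico (hu.wfSym_or_wfChk (.inl hWF)) (SCTree.LeafEpsLtOne.of_subtree hleaf hu)).2
  exact ⟨hnodes, hnodes T (.refl T)⟩
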